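/- Under the same boundedness assumptions, for any γ, γ' with ‖(1,γᵀ)‖_∞ ≤ γ_max, ‖(1,γ'ᵀ)‖_∞ ≤ γ_max and any θ with ‖θ‖_∞ ≤ θ_max: ‖∇_γ L_n(θ,γ) − ∇_γ L_n(θ,γ')‖₂ ≤ d₁ K ‖γ − γ'‖₂, where K = max{θ_max², γ_max²} φ_max² ψ_max². -/
import Mathlib


open RealInnerProductSpace

/-- The logistic sigmoid function `μ(v) = 1 / (1 + e^{-v})`. -/
noncomputable def mu (v : ℝ) : ℝ := 1 / (1 + Real.exp (-v))

lemma mu_hasDerivAt (v : ℝ) :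
    HasDerivAt mu (Real.exp (-v) / (1 + Real.exp (-v)) ^ 2) v := by
  have h1 : HasDerivAt (fun w : ℝ => 1 + Real.exp (-w)) (-Real.exp (-v)) v := by
    simpa using ((Real.hasDerivAt_exp (-v)).comp v (hasDerivAt_neg v)).const_add 1
  have hne : (1 : ℝ) + Real.exp (-v) ≠ 0 := by positivity
  have h2 := h1.inv hne
  have h3 : - -Real.exp (-v) / (1 + Real.exp (-v)) ^ 2
      = Real.exp (-v) / (1 + Real.exp (-v)) ^ 2 := by ring
  rw [h3] at h2
  have hmu : mu = fun y => (1 + Real.exp (-y))⁻¹ := by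
    funext w; simp [mu]
  rw [hmu]; exact h2

lemma mu_lip (a b : ℝ) : |mu a - mu b| ≤ (1 / 4) * |a - b| := by
  have := Convex.norm_image_sub_le_of_norm_hasDerivWithin_le
    (s := (Set.univ : Set ℝ)) (f := mu) (C := 1/4)
    (f' := fun v => Real.exp (-v) / (1 + Real.exp (-v)) ^ 2)
    (fun v _ => (mu_hasDerivAt v).hasDerivWithinAt)
    (fun v _ => by
      rw [Real.norm_eq_abs, abs_of_nonneg (by positivity)]
      rw [div_le_iff₀ (by positivity)]
      nlinarith [Real.exp_pos (-v), sq_nonneg (1 - Real.exp (-v))])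
    convex_univ (Set.mem_univ b) (Set.mem_univ a)
  simpa [Real.norm_eq_abs] using this


/-- Lipschitz continuity in `γ` of the `γ`-gradient of the negative log-likelihood:
with `‖z_i‖₂ ≤ 2φ_max`, `‖(ψ₀(x), ψ(x)ᵀ)‖₂ ≤ ψ_max`, `‖θ‖_∞ ≤ θ_max`,
`‖(1, γᵀ)‖_∞ ≤ γ_max`, `‖(1, γ'ᵀ)‖_∞ ≤ γ_max`, and
`K = max{θ_max², γ_max²} φ_max² ψ_max²`:
`‖∇_γ L_n(θ, γ) - ∇_γ L_n(θ, γ')‖₂ ≤ d₁ K ‖γ - γ'‖₂`, where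
`∇_γ L_n(θ, γ) = -(1/n) ∑ i, (y_i - μ(σ_γ(x_i) θᵀz_i)) (θᵀz_i) ψ(x_i)`
and `σ_γ(x) = ψ₀(x) + γᵀψ(x)`. -/
theorem grad_gamma_lipschitz_in_gamma
    (n d1 d2 : ℕ) (hn : 0 < n) (X : Type*) (x : Fin n → X)
    (z : Fin n → EuclideanSpace ℝ (Fin d1)) (y : Fin n → ℝ)
    (hy : ∀ i, y i = 0 ∨ y i = 1)
    (ψ0 : X → ℝ) (ψ : X → EuclideanSpace ℝ (Fin d2))
    (θmax γmax φmax ψmax K : ℝ)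
    (hz : ∀ i, ‖z i‖ ≤ 2 * φmax)
    (hψ : ∀ ξ : X, (ψ0 ξ) ^ 2 + ‖ψ ξ‖ ^ 2 ≤ ψmax ^ 2)
    (hK : K = max (θmax ^ 2) (γmax ^ 2) * φmax ^ 2 * ψmax ^ 2)
    (θ : EuclideanSpace ℝ (Fin d1)) (hθ : ∀ j, |θ j| ≤ θmax)
    (γ γ' : EuclideanSpace ℝ (Fin d2))
    (hγ : 1 ≤ γmax ∧ ∀ j, |γ j| ≤ γmax)
    (hγ' : 1 ≤ γmax ∧ ∀ j, |γ' j| ≤ γmax) :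
    ‖(-((1 : ℝ) / n) • ∑ i,
        ((y i - mu ((ψ0 (x i) + ⟪γ, ψ (x i)⟫) * ⟪θ, z i⟫)) * ⟪θ, z i⟫) • ψ (x i)) -
      (-((1 : ℝ) / n) • ∑ i,
        ((y i - mu ((ψ0 (x i) + ⟪γ', ψ (x i)⟫) * ⟪θ, z i⟫)) * ⟪θ, z i⟫) • ψ (x i))‖
      ≤ d1 * K * ‖γ - γ'‖ := by

  have i0 : Fin n := ⟨0, hn⟩
  have hφ : 0 ≤ φmax := by
    have := hz i0; have := norm_nonneg (z i0); linarith
  have hψm : 0 ≤ ψmax ^ 2 := le_trans (by positivity) (hψ (x i0))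
  -- bound on ‖θ‖²
  have hθn : ‖θ‖ ^ 2 ≤ (d1 : ℝ) * θmax ^ 2 := by
    rw [EuclideanSpace.norm_eq, Real.sq_sqrt (by positivity)]
    calc ∑ j, ‖θ j‖ ^ 2 ≤ ∑ _j : Fin d1, θmax ^ 2 := by
          apply Finset.sum_le_sum
          intro j _
          rw [Real.norm_eq_abs, ← sq_abs θmax]
          exact pow_le_pow_left₀ (abs_nonneg _) ((hθ j).trans (le_abs_self _)) 2
      _ = (d1 : ℝ) * θmax ^ 2 := by
          simp [Finset.sum_const, nsmul_eq_mul]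
  -- per-term bound
  have key : ∀ i : Fin n,
      ‖(((y i - mu ((ψ0 (x i) + ⟪γ, ψ (x i)⟫) * ⟪θ, z i⟫)) * ⟪θ, z i⟫) • ψ (x i)) -
       (((y i - mu ((ψ0 (x i) + ⟪γ', ψ (x i)⟫) * ⟪θ, z i⟫)) * ⟪θ, z i⟫) • ψ (x i))‖
      ≤ (d1 : ℝ) * K * ‖γ - γ'‖ := by
    intro i
    set t : ℝ := ⟪θ, z i⟫ with hdt
    set s : EuclideanSpace ℝ (Fin d2) := ψ (x i) with hds
    set p : ℝ := ψ0 (x i) with hdp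
    have ht2 : |t| ^ 2 ≤ (d1 : ℝ) * θmax ^ 2 * (2 * φmax) ^ 2 := by
      have h1 : |t| ≤ ‖θ‖ * ‖z i‖ := abs_real_inner_le_norm θ (z i)
      have h2 : ‖z i‖ ≤ 2 * φmax := hz i
      have h3 : |t| ^ 2 ≤ (‖θ‖ * ‖z i‖) ^ 2 := pow_le_pow_left₀ (abs_nonneg t) h1 2
      have h4 : ‖z i‖ ^ 2 ≤ (2 * φmax) ^ 2 := pow_le_pow_left₀ (norm_nonneg _) h2 2
      have h5 : 0 ≤ (d1 : ℝ) * θmax ^ 2 := le_trans (sq_nonneg ‖θ‖) hθn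
      calc |t| ^ 2 ≤ (‖θ‖ * ‖z i‖) ^ 2 := h3
        _ = ‖θ‖ ^ 2 * ‖z i‖ ^ 2 := by ring
        _ ≤ (d1 : ℝ) * θmax ^ 2 * (2 * φmax) ^ 2 :=
            mul_le_mul hθn h4 (sq_nonneg _) h5
    have hs2 : ‖s‖ ^ 2 ≤ ψmax ^ 2 := by
      have := hψ (x i); have := sq_nonneg (ψ0 (x i)); rw [← hds] at *; linarith
    have e1 : (((y i - mu ((p + ⟪γ, s⟫) * t)) * t) • s) -
        (((y i - mu ((p + ⟪γ', s⟫) * t)) * t) • s) =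
        ((mu ((p + ⟪γ', s⟫) * t) - mu ((p + ⟪γ, s⟫) * t)) * t) • s := by
      rw [← sub_smul]; congr 1; ring
    rw [e1, norm_smul, Real.norm_eq_abs, abs_mul]
    have hmu := mu_lip ((p + ⟪γ', s⟫) * t) ((p + ⟪γ, s⟫) * t)
    have hud : |(p + ⟪γ', s⟫) * t - (p + ⟪γ, s⟫) * t| ≤ ‖γ - γ'‖ * ‖s‖ * |t| := by
      have e2 : (p + ⟪γ', s⟫) * t - (p + ⟪γ, s⟫) * t = ⟪γ' - γ, s⟫ * t := by
        rw [inner_sub_left]; ring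
      rw [e2, abs_mul]
      have h3 : |⟪γ' - γ, s⟫| ≤ ‖γ - γ'‖ * ‖s‖ := by
        calc |⟪γ' - γ, s⟫| ≤ ‖γ' - γ‖ * ‖s‖ := abs_real_inner_le_norm _ _
          _ = ‖γ - γ'‖ * ‖s‖ := by rw [norm_sub_rev]
      exact mul_le_mul_of_nonneg_right h3 (abs_nonneg t)
    have hmu2 : |mu ((p + ⟪γ', s⟫) * t) - mu ((p + ⟪γ, s⟫) * t)| ≤
        1 / 4 * (‖γ - γ'‖ * ‖s‖ * |t|) := hmu.trans (by linarith)
    calc |mu ((p + ⟪γ', s⟫) * t) - mu ((p + ⟪γ, s⟫) * t)| * |t| * ‖s‖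
        ≤ (1 / 4 * (‖γ - γ'‖ * ‖s‖ * |t|)) * |t| * ‖s‖ := by
          apply mul_le_mul_of_nonneg_right _ (norm_nonneg s)
          exact mul_le_mul_of_nonneg_right hmu2 (abs_nonneg t)
      _ = 1 / 4 * ‖γ - γ'‖ * (‖s‖ ^ 2 * |t| ^ 2) := by ring
      _ ≤ 1 / 4 * ‖γ - γ'‖ * (ψmax ^ 2 * ((d1 : ℝ) * θmax ^ 2 * (2 * φmax) ^ 2)) := by
          have h6 : ‖s‖ ^ 2 * |t| ^ 2 ≤ ψmax ^ 2 * ((d1 : ℝ) * θmax ^ 2 * (2 * φmax) ^ 2) :=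
            mul_le_mul hs2 ht2 (by positivity) hψm
          exact mul_le_mul_of_nonneg_left h6 (by positivity)
      _ = (d1 : ℝ) * (θmax ^ 2 * (φmax ^ 2 * ψmax ^ 2)) * ‖γ - γ'‖ := by ring
      _ ≤ (d1 : ℝ) * (max (θmax ^ 2) (γmax ^ 2) * (φmax ^ 2 * ψmax ^ 2)) * ‖γ - γ'‖ := by
          gcongr
          exact le_max_left _ _
      _ = (d1 : ℝ) * K * ‖γ - γ'‖ := by rw [hK]; ring
  have hn' : (n : ℝ) ≠ 0 := Nat.cast_ne_zero.mpr hn.ne'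
  rw [← smul_sub, ← Finset.sum_sub_distrib, norm_smul]
  have hnorm : ‖(-((1 : ℝ) / n))‖ = 1 / n := by
    rw [norm_neg, Real.norm_eq_abs, abs_of_nonneg (by positivity)]
  rw [hnorm]
  have hsum : ‖∑ i, ((((y i - mu ((ψ0 (x i) + ⟪γ, ψ (x i)⟫) * ⟪θ, z i⟫)) * ⟪θ, z i⟫) • ψ (x i)) -
       (((y i - mu ((ψ0 (x i) + ⟪γ', ψ (x i)⟫) * ⟪θ, z i⟫)) * ⟪θ, z i⟫) • ψ (x i)))‖
      ≤ (n : ℝ) * ((d1 : ℝ) * K * ‖γ - γ'‖) := by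
    calc ‖∑ i, ((((y i - mu ((ψ0 (x i) + ⟪γ, ψ (x i)⟫) * ⟪θ, z i⟫)) * ⟪θ, z i⟫) • ψ (x i)) -
         (((y i - mu ((ψ0 (x i) + ⟪γ', ψ (x i)⟫) * ⟪θ, z i⟫)) * ⟪θ, z i⟫) • ψ (x i)))‖
        ≤ ∑ i : Fin n, (d1 : ℝ) * K * ‖γ - γ'‖ :=
          (norm_sum_le _ _).trans (Finset.sum_le_sum fun i _ => key i)
      _ = (n : ℝ) * ((d1 : ℝ) * K * ‖γ - γ'‖) := by
          simp [Finset.sum_const, nsmul_eq_mul]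
  calc (1 / (n : ℝ)) * ‖∑ i, ((((y i - mu ((ψ0 (x i) + ⟪γ, ψ (x i)⟫) * ⟪θ, z i⟫)) * ⟪θ, z i⟫) • ψ (x i)) -
       (((y i - mu ((ψ0 (x i) + ⟪γ', ψ (x i)⟫) * ⟪θ, z i⟫)) * ⟪θ, z i⟫) • ψ (x i)))‖
      ≤ (1 / (n : ℝ)) * ((n : ℝ) * ((d1 : ℝ) * K * ‖γ - γ'‖)) :=
        mul_le_mul_of_nonneg_left hsum (by positivity)
    _ = (d1 : ℝ) * K * ‖γ - γ'‖ := by field_simp
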